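/- arXiv:2206.12364 — 4 statements merged into one kernel-verified Lean document; each statement's English description precedes it below -/
import Mathlib

section
/- For the 0/1 loss, the robust surrogate has a closed form: for a point z₀ with label y₀ and classifier h, sup over z of (1[h(z) ≠ y₀] − γ·‖z − z₀‖²) equals max(0, 1 − γ·d²), where d = inf{‖z − z₀‖ : h(z) ≠ y₀} is the distance to the nearest misclassified point (assuming the infimum is attained). -/
/-! A point `z` with `h z = y₀` contributes at most `0`, attained at `z₀`; a misclassified point
contributes `1 - γ‖z - z₀‖²`, which is largest at the nearest misclassified point `zadv`. -/

section RobustSurrogate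

variable {E : Type*} [NormedAddCommGroup E] {p : E → Prop} [DecidablePred p] {z₀ : E} {γ : ℝ}

theorem ite_sub_mul_norm_sq_le_max (hγ : 0 ≤ γ) {d : ℝ} (hd₀ : 0 ≤ d)
    (hd : ∀ z, p z → d ≤ ‖z - z₀‖) (z : E) :
    (if p z then (1 : ℝ) else 0) - γ * ‖z - z₀‖ ^ 2 ≤ max 0 (1 - γ * d ^ 2) := by
  by_cases hz : p z
  · have hsq : d ^ 2 ≤ ‖z - z₀‖ ^ 2 := pow_le_pow_left₀ hd₀ (hd z hz) 2
    rw [if_pos hz]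
    exact le_max_of_le_right (by nlinarith)
  · rw [if_neg hz]
    exact le_max_of_le_left (by nlinarith [sq_nonneg ‖z - z₀‖])

theorem isLUB_ite_sub_mul_norm_sq (hγ : 0 ≤ γ) {zadv : E} (hadv : p zadv)
    (hmin : ∀ z, p z → ‖zadv - z₀‖ ≤ ‖z - z₀‖) :
    IsLUB {v : ℝ | ∃ z : E, v = (if p z then (1 : ℝ) else 0) - γ * ‖z - z₀‖ ^ 2}
      (max 0 (1 - γ * ‖zadv - z₀‖ ^ 2)) := by
  refine ⟨?_, fun b hb => max_le ?_ ?_⟩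
  · rintro v ⟨z, rfl⟩
    exact ite_sub_mul_norm_sq_le_max hγ (norm_nonneg _) hmin z
  · have hz₀ := hb ⟨z₀, rfl⟩
    simp only [sub_self, norm_zero] at hz₀
    split_ifs at hz₀ <;> linarith
  · simpa only [if_pos hadv] using hb ⟨zadv, rfl⟩

end RobustSurrogate

/-- closed form of the robust surrogate for the 0/1 loss. -/
theorem stmt_0 {E Y : Type*} [NormedAddCommGroup E] [DecidableEq Y] (h : E → Y) (y₀ : Y) (z₀ : E)
    (γ : ℝ) (hγ : 0 ≤ γ) (zadv : E) (hadv : h zadv ≠ y₀) (d : ℝ)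
    (hd : d = ‖zadv - z₀‖)
    (hinf : IsGLB {r : ℝ | ∃ z : E, h z ≠ y₀ ∧ r = ‖z - z₀‖} d) :
    IsLUB {v : ℝ | ∃ z : E, v = (if h z ≠ y₀ then (1 : ℝ) else 0) - γ * ‖z - z₀‖ ^ 2}
      (max 0 (1 - γ * d ^ 2)) := by
  subst hd
  exact isLUB_ite_sub_mul_norm_sq hγ hadv fun z hz => hinf.1 ⟨z, hz, rfl⟩
end

section
/- Ben-David-style target error bound (total variation version): for a binary hypothesis h : X → {0,1} and labeling functions f_S, f_T : X → [0,1], the target error E_T(h, f_T) = E_{x∼P_T}|h(x) − f_T(x)| satisfies E_T(h, f_T) ≤ E_S(h, f_S) + 2·d_TV(P_S, P_T) + min(E_{P_S}|f_S − f_T|, E_{P_T}|f_S − f_T|), where d_TV denotes the total variation distance. -/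
open MeasureTheory Set

private lemma tv_step {X : Type*} [MeasurableSpace X] (PS PT : Measure X)
    [IsProbabilityMeasure PS] [IsProbabilityMeasure PT]
    (g : X → ℝ) (hg : Measurable g) (hg0 : ∀ x, 0 ≤ g x) (hg1 : ∀ x, g x ≤ 1) :
    ∫ x, g x ∂PT ≤ (∫ x, g x ∂PS) +
      sSup {r : ℝ | ∃ A : Set X, MeasurableSet A ∧
          r = |(PS A).toReal - (PT A).toReal|} := by
  set D := sSup {r : ℝ | ∃ A : Set X, MeasurableSet A ∧
      r = |(PS A).toReal - (PT A).toReal|} with hD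
  have hbdd : BddAbove {r : ℝ | ∃ A : Set X, MeasurableSet A ∧
      r = |(PS A).toReal - (PT A).toReal|} := by
    refine ⟨1, fun r hr => ?_⟩
    obtain ⟨A, -, rfl⟩ := hr
    have h1 : (PS A).toReal ≤ 1 := by
      simpa using ENNReal.toReal_mono (by simp) (prob_le_one (μ := PS) (s := A))
    have h2 : (PT A).toReal ≤ 1 := by
      simpa using ENNReal.toReal_mono (by simp) (prob_le_one (μ := PT) (s := A))
    have h3 : 0 ≤ (PS A).toReal := ENNReal.toReal_nonneg
    have h4 : 0 ≤ (PT A).toReal := ENNReal.toReal_nonneg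
    rw [abs_le]; constructor <;> linarith
  have hDle : ∀ A : Set X, MeasurableSet A →
      (PT A).toReal ≤ (PS A).toReal + D := by
    intro A hA
    have : |(PS A).toReal - (PT A).toReal| ≤ D :=
      le_csSup hbdd ⟨A, hA, rfl⟩
    have := (abs_le.mp this).1
    linarith
  have hintS : Integrable g PS := by
    refine Integrable.mono' (integrable_const 1) hg.aestronglyMeasurable ?_
    exact .of_forall fun x => by rw [Real.norm_eq_abs, abs_of_nonneg (hg0 x)]; exact hg1 x
  have hintT : Integrable g PT := by
    refine Integrable.mono' (integrable_const 1) hg.aestronglyMeasurable ?_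
    exact .of_forall fun x => by rw [Real.norm_eq_abs, abs_of_nonneg (hg0 x)]; exact hg1 x
  rw [hintT.integral_eq_integral_Ioc_meas_le (M := 1) (.of_forall hg0) (.of_forall hg1),
      hintS.integral_eq_integral_Ioc_meas_le (M := 1) (.of_forall hg0) (.of_forall hg1)]
  have intbl : ∀ (μ : Measure X), IsProbabilityMeasure μ →
      IntegrableOn (fun t => ENNReal.toReal (μ {a | t ≤ g a})) (Ioc (0:ℝ) 1) := by
    intro μ hμ
    apply Measure.integrableOn_of_bounded (M := 1) measure_Ioc_lt_top.ne
    · apply (Measurable.ennreal_toReal (Antitone.measurable ?_)).aestronglyMeasurable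
      exact fun _ _ hst => measure_mono (fun _ h => hst.trans h)
    · refine .of_forall fun t => ?_
      rw [Real.norm_eq_abs, ENNReal.abs_toReal]
      simpa using ENNReal.toReal_mono (by simp) (prob_le_one (μ := μ) (s := {a | t ≤ g a}))
  have intbl1 := intbl PS inferInstance
  have intbl2 := intbl PT inferInstance
  calc ∫ t in Ioc (0:ℝ) 1, (PT {a | t ≤ g a}).toReal
      ≤ ∫ t in Ioc (0:ℝ) 1, ((PS {a | t ≤ g a}).toReal + D) := by
        refine setIntegral_mono_on intbl2 (intbl1.add (integrableOn_const measure_Ioc_lt_top.ne)) measurableSet_Ioc fun t _ => ?_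
        exact hDle _ (hg measurableSet_Ici)
    _ = (∫ t in Ioc (0:ℝ) 1, (PS {a | t ≤ g a}).toReal) + D := by
        rw [integral_add intbl1 (integrableOn_const measure_Ioc_lt_top.ne)]
        simp [Real.volume_Ioc]

/-- Ben-David-style target error bound, total variation version:
`E_T(h, f_T) ≤ E_S(h, f_S) + 2 d_TV(P_S, P_T) + min (E_{P_S}|f_S − f_T|, E_{P_T}|f_S − f_T|)`. -/
theorem stmt_13 {X : Type*} [MeasurableSpace X] (PS PT : Measure X)
    [IsProbabilityMeasure PS] [IsProbabilityMeasure PT]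
    (h fS fT : X → ℝ) (hh : Measurable h) (hfS : Measurable fS) (hfT : Measurable fT)
    (hh01 : ∀ x, h x ∈ Set.Icc (0 : ℝ) 1) (hfS01 : ∀ x, fS x ∈ Set.Icc (0 : ℝ) 1)
    (hfT01 : ∀ x, fT x ∈ Set.Icc (0 : ℝ) 1) :
    ∫ x, |h x - fT x| ∂PT ≤
      (∫ x, |h x - fS x| ∂PS) +
        2 * sSup {r : ℝ | ∃ A : Set X, MeasurableSet A ∧
            r = |(PS A).toReal - (PT A).toReal|} +
        min (∫ x, |fS x - fT x| ∂PS) (∫ x, |fS x - fT x| ∂PT) := by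
  set D := sSup {r : ℝ | ∃ A : Set X, MeasurableSet A ∧
      r = |(PS A).toReal - (PT A).toReal|} with hD
  have hD0 : 0 ≤ D := by
    refine le_csSup ?_ ⟨∅, MeasurableSet.empty, by simp⟩
    refine ⟨1, fun r hr => ?_⟩
    obtain ⟨A, -, rfl⟩ := hr
    have h1 : (PS A).toReal ≤ 1 := by
      simpa using ENNReal.toReal_mono (by simp) (prob_le_one (μ := PS) (s := A))
    have h2 : (PT A).toReal ≤ 1 := by
      simpa using ENNReal.toReal_mono (by simp) (prob_le_one (μ := PT) (s := A))
    have h3 : 0 ≤ (PS A).toReal := ENNReal.toReal_nonneg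
    have h4 : 0 ≤ (PT A).toReal := ENNReal.toReal_nonneg
    rw [abs_le]; constructor <;> linarith
  have habs : ∀ (u v : X → ℝ), (∀ x, u x ∈ Set.Icc (0:ℝ) 1) → (∀ x, v x ∈ Set.Icc (0:ℝ) 1) →
      (∀ x, 0 ≤ |u x - v x|) ∧ (∀ x, |u x - v x| ≤ 1) := by
    intro u v hu hv
    refine ⟨fun x => abs_nonneg _, fun x => ?_⟩
    have h1 := hu x; have h2 := hv x
    rw [Set.mem_Icc] at h1 h2
    rw [abs_le]; constructor <;> linarith
  have hint : ∀ (u v : X → ℝ), Measurable u → Measurable v →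
      (∀ x, u x ∈ Set.Icc (0:ℝ) 1) → (∀ x, v x ∈ Set.Icc (0:ℝ) 1) → (μ : Measure X) →
      IsProbabilityMeasure μ → Integrable (fun x => |u x - v x|) μ := by
    intro u v hu hv hu01 hv01 μ hμ
    refine Integrable.mono' (integrable_const 1) ((hu.sub hv).abs).aestronglyMeasurable ?_
    refine .of_forall fun x => ?_
    rw [Real.norm_eq_abs, abs_abs]
    exact (habs u v hu01 hv01).2 x
  -- triangle pointwise
  have htri : ∀ (μ : Measure X), IsProbabilityMeasure μ →
      ∫ x, |h x - fT x| ∂μ ≤ (∫ x, |h x - fS x| ∂μ) + ∫ x, |fS x - fT x| ∂μ := by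
    intro μ hμ
    rw [← integral_add (hint h fS hh hfS hh01 hfS01 μ hμ) (hint fS fT hfS hfT hfS01 hfT01 μ hμ)]
    refine integral_mono (hint h fT hh hfT hh01 hfT01 μ hμ)
      ((hint h fS hh hfS hh01 hfS01 μ hμ).add (hint fS fT hfS hfT hfS01 hfT01 μ hμ)) fun x => ?_
    calc |h x - fT x| = |(h x - fS x) + (fS x - fT x)| := by ring_nf
      _ ≤ |h x - fS x| + |fS x - fT x| := abs_add_le _ _
  rcases min_cases (∫ x, |fS x - fT x| ∂PS) (∫ x, |fS x - fT x| ∂PT) with ⟨heq, -⟩ | ⟨heq, -⟩ <;>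
    rw [heq]
  · -- route via PS: PT-integral ≤ PS-integral + D, then triangle under PS
    have step1 : ∫ x, |h x - fT x| ∂PT ≤ (∫ x, |h x - fT x| ∂PS) + D := by
      obtain ⟨h0, h1⟩ := habs h fT hh01 hfT01
      exact tv_step PS PT _ ((hh.sub hfT).abs) h0 h1
    have step2 := htri PS inferInstance
    linarith
  · -- route via PT: triangle under PT, then move |h - fS| from PT to PS
    have step1 := htri PT inferInstance
    have step2 : ∫ x, |h x - fS x| ∂PT ≤ (∫ x, |h x - fS x| ∂PS) + D := by
      obtain ⟨h0, h1⟩ := habs h fS hh01 hfS01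
      exact tv_step PS PT _ ((hh.sub hfS).abs) h0 h1
    linarith
end

section
/- Wasserstein version of the target error bound: if h and f_S, f_T are all K-Lipschitz functions from X to ℝ, then E_T(h, f_T) ≤ E_S(h, f_S) + 2K·W₁(P_S, P_T) + E_{P_T}[|f_S − f_T|]. -/
open MeasureTheory

/-- 1-Wasserstein distance as an infimum over couplings. -/
noncomputable def W1 {Z : Type*} [PseudoEMetricSpace Z] [MeasurableSpace Z]
    (μ ν : Measure Z) : ENNReal :=
  ⨅ (π : Measure (Z × Z)) (_ : π.map Prod.fst = μ) (_ : π.map Prod.snd = ν),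
    ∫⁻ p, edist p.1 p.2 ∂π

/-- Coupling bound: transporting the integral of an `M`-Lipschitz function costs at most
`M` times the transport cost of the coupling. -/
lemma coupling_bound {X : Type*} [MetricSpace X] [MeasurableSpace X] [BorelSpace X]
    (PS PT : Measure X)
    (M : NNReal) (g : X → ℝ) (hg : LipschitzWith M g)
    (hgS : Integrable g PS) (hgT : Integrable g PT)
    (π : Measure (X × X)) (h1 : π.map Prod.fst = PS) (h2 : π.map Prod.snd = PT) :
    ENNReal.ofReal (∫ x, g x ∂PT) ≤
      ENNReal.ofReal (∫ x, g x ∂PS) + (M : ENNReal) * ∫⁻ p, edist p.1 p.2 ∂π := by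
  have hmeas_fst : Measurable (Prod.fst : X × X → X) := measurable_fst
  have hmeas_snd : Measurable (Prod.snd : X × X → X) := measurable_snd
  have hgm : AEStronglyMeasurable g PS := hgS.aestronglyMeasurable
  have hgmT : AEStronglyMeasurable g PT := hgT.aestronglyMeasurable
  have hiS : ∫ x, g x ∂PS = ∫ p, g p.1 ∂π := by
    rw [← h1, integral_map hmeas_fst.aemeasurable (h1 ▸ hgm)]
  have hiT : ∫ x, g x ∂PT = ∫ p, g p.2 ∂π := by
    rw [← h2, integral_map hmeas_snd.aemeasurable (h2 ▸ hgmT)]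
  have hgS' : Integrable (fun p : X × X => g p.1) π := by
    have := (integrable_map_measure (h1 ▸ hgm) hmeas_fst.aemeasurable).mp (h1 ▸ hgS)
    exact this
  have hgT' : Integrable (fun p : X × X => g p.2) π := by
    have := (integrable_map_measure (h2 ▸ hgmT) hmeas_snd.aemeasurable).mp (h2 ▸ hgT)
    exact this
  have hΔ : Integrable (fun p : X × X => |g p.2 - g p.1|) π := (hgT'.sub hgS').abs
  -- real inequality
  have key : ∫ x, g x ∂PT ≤ ∫ x, g x ∂PS + ∫ p, |g p.2 - g p.1| ∂π := by
    rw [hiS, hiT]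
    have h1' : ∫ p, g p.2 ∂π - ∫ p, g p.1 ∂π = ∫ p, (g p.2 - g p.1) ∂π :=
      (integral_sub hgT' hgS').symm
    have h2' : ∫ p, (g p.2 - g p.1) ∂π ≤ ∫ p, |g p.2 - g p.1| ∂π :=
      integral_mono (hgT'.sub hgS') hΔ fun p => le_abs_self _
    linarith
  calc ENNReal.ofReal (∫ x, g x ∂PT)
      ≤ ENNReal.ofReal (∫ x, g x ∂PS + ∫ p, |g p.2 - g p.1| ∂π) :=
        ENNReal.ofReal_le_ofReal key
    _ ≤ ENNReal.ofReal (∫ x, g x ∂PS) + ENNReal.ofReal (∫ p, |g p.2 - g p.1| ∂π) :=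
        ENNReal.ofReal_add_le
    _ ≤ ENNReal.ofReal (∫ x, g x ∂PS) + (M : ENNReal) * ∫⁻ p, edist p.1 p.2 ∂π := by
        refine add_le_add_right ?_ _
        rw [ofReal_integral_eq_lintegral_ofReal hΔ
          (Filter.Eventually.of_forall fun p => abs_nonneg _)]
        have hb : ∀ p : X × X, ENNReal.ofReal |g p.2 - g p.1| ≤
            (M : ENNReal) * edist p.1 p.2 := by
          intro p
          have hd := hg.dist_le_mul p.2 p.1
          rw [Real.dist_eq, dist_comm p.2 p.1] at hd
          calc ENNReal.ofReal |g p.2 - g p.1| ≤ ENNReal.ofReal ((M : ℝ) * dist p.1 p.2) :=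
                ENNReal.ofReal_le_ofReal hd
            _ = (M : ENNReal) * edist p.1 p.2 := by
                rw [ENNReal.ofReal_mul M.coe_nonneg, ENNReal.ofReal_coe_nnreal, edist_dist]
        calc ∫⁻ p, ENNReal.ofReal |g p.2 - g p.1| ∂π
            ≤ ∫⁻ p, (M : ENNReal) * edist p.1 p.2 ∂π := lintegral_mono hb
          _ = (M : ENNReal) * ∫⁻ p, edist p.1 p.2 ∂π :=
              lintegral_const_mul' _ _ ENNReal.coe_ne_top

lemma mul_iInf_aux {ι : Sort*} (M : NNReal) (hM : (M : ENNReal) ≠ 0) (f : ι → ENNReal) :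
    (M : ENNReal) * ⨅ i, f i = ⨅ i, (M : ENNReal) * f i :=
  ENNReal.mul_iInf' (fun h => absurd h ENNReal.coe_ne_top) (fun h => absurd h hM)

/-- the W1 version of the coupling bound -/
lemma w1_bound {X : Type*} [MetricSpace X] [MeasurableSpace X] [BorelSpace X]
    (PS PT : Measure X) [IsProbabilityMeasure PS] [IsProbabilityMeasure PT]
    (M : NNReal) (g : X → ℝ) (hg : LipschitzWith M g)
    (hgS : Integrable g PS) (hgT : Integrable g PT) :
    ENNReal.ofReal (∫ x, g x ∂PT) ≤
      ENNReal.ofReal (∫ x, g x ∂PS) + (M : ENNReal) * W1 PS PT := by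
  rcases eq_or_ne M 0 with hM | hM
  · -- g is constant
    subst hM
    rcases isEmpty_or_nonempty X with hX | hX
    · haveI := hX
      have h1 : (1 : ENNReal) = 0 := by
        rw [← measure_univ (μ := PT), PT.eq_zero_of_isEmpty]
        simp
      exact absurd h1 one_ne_zero
    obtain ⟨x₀⟩ := hX
    have hconst : ∀ x, g x = g x₀ := fun x => by
      have := hg.dist_le_mul x x₀
      simpa [dist_le_zero] using this
    have hPT : ∫ x, g x ∂PT = g x₀ := by
      rw [show g = fun _ => g x₀ from funext hconst]; simp
    have hPS : ∫ x, g x ∂PS = g x₀ := by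
      rw [show g = fun _ => g x₀ from funext hconst]; simp
    rw [hPT, hPS]
    exact le_add_right le_rfl
  · have hM' : (M : ENNReal) ≠ 0 := by exact_mod_cast hM
    have hrw : ENNReal.ofReal (∫ x, g x ∂PS) + (M : ENNReal) * W1 PS PT =
        ⨅ (π : Measure (X × X)) (_ : π.map Prod.fst = PS) (_ : π.map Prod.snd = PT),
          (ENNReal.ofReal (∫ x, g x ∂PS) + (M : ENNReal) * ∫⁻ p, edist p.1 p.2 ∂π) := by
      rw [W1, mul_iInf_aux M hM', ENNReal.add_iInf]
      refine iInf_congr fun π => ?_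
      rw [mul_iInf_aux M hM', ENNReal.add_iInf]
      refine iInf_congr fun h1 => ?_
      rw [mul_iInf_aux M hM', ENNReal.add_iInf]
    rw [hrw]
    exact le_iInf fun π => le_iInf fun h1 => le_iInf fun h2 =>
      coupling_bound PS PT M g hg hgS hgT π h1 h2

/-- Wasserstein version of the target error bound: if `h, f_S, f_T` are all
`K`-Lipschitz, then `E_T(h, f_T) ≤ E_S(h, f_S) + 2K·W₁(P_S, P_T) + E_{P_T}|f_S − f_T|`. -/
theorem stmt_14 {X : Type*} [MetricSpace X] [MeasurableSpace X] [BorelSpace X]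
    (PS PT : Measure X) [IsProbabilityMeasure PS] [IsProbabilityMeasure PT]
    (K : NNReal) (h fS fT : X → ℝ)
    (hh : LipschitzWith K h) (hfS : LipschitzWith K fS) (hfT : LipschitzWith K fT)
    (hhS : Integrable h PS) (hhT : Integrable h PT)
    (hfSS : Integrable fS PS) (hfST : Integrable fS PT)
    (hfTS : Integrable fT PS) (hfTT : Integrable fT PT) :
    ENNReal.ofReal (∫ x, |h x - fT x| ∂PT) ≤
      ENNReal.ofReal (∫ x, |h x - fS x| ∂PS) + 2 * (K : ENNReal) * W1 PS PT +
        ENNReal.ofReal (∫ x, |fS x - fT x| ∂PT) := by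
  set g : X → ℝ := fun x => |h x - fS x| with hgdef
  have hglip : LipschitzWith (2 * K) g := by
    have hsub : LipschitzWith (K + K) (fun x => h x - fS x) := hh.sub hfS
    have := lipschitzWith_one_norm.comp hsub
    simpa [Real.norm_eq_abs, two_mul, hgdef, Function.comp_def] using this
  have hgSint : Integrable g PS := by simpa using (hhS.sub hfSS).abs
  have hgTint : Integrable g PT := by simpa using (hhT.sub hfST).abs
  have hdT : Integrable (fun x => |fS x - fT x|) PT := by simpa using (hfST.sub hfTT).abs
  have hhfT : Integrable (fun x => |h x - fT x|) PT := by simpa using (hhT.sub hfTT).abs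
  have tri : ENNReal.ofReal (∫ x, |h x - fT x| ∂PT) ≤
      ENNReal.ofReal (∫ x, g x ∂PT) + ENNReal.ofReal (∫ x, |fS x - fT x| ∂PT) := by
    rw [← ENNReal.ofReal_add (integral_nonneg fun x => abs_nonneg _)
      (integral_nonneg fun x => abs_nonneg _)]
    refine ENNReal.ofReal_le_ofReal ?_
    rw [← integral_add hgTint hdT]
    refine integral_mono hhfT (hgTint.add hdT) fun x => ?_
    have hx : h x - fT x = (h x - fS x) + (fS x - fT x) := by ring
    rw [hx]
    exact abs_add_le _ _
  have hw := w1_bound PS PT (2 * K) g hglip hgSint hgTint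
  calc ENNReal.ofReal (∫ x, |h x - fT x| ∂PT)
      ≤ ENNReal.ofReal (∫ x, g x ∂PT) + ENNReal.ofReal (∫ x, |fS x - fT x| ∂PT) := tri
    _ ≤ (ENNReal.ofReal (∫ x, g x ∂PS) + ((2 * K : NNReal) : ENNReal) * W1 PS PT) +
        ENNReal.ofReal (∫ x, |fS x - fT x| ∂PT) := add_le_add_left hw _
    _ = ENNReal.ofReal (∫ x, |h x - fS x| ∂PS) + 2 * (K : ENNReal) * W1 PS PT +
        ENNReal.ofReal (∫ x, |fS x - fT x| ∂PT) := by
        push_cast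
        simp only [hgdef]
end

section
/- For the cost c((z₁, y₁), (z₂, y₂)) = ‖z₁ − z₂‖² + ∞·1[y₁ ≠ y₂], the optimal transport distance OT_c(P, Q) between two joint distributions with identical label marginals equals the label-weighted sum of squared 2-Wasserstein distances between the class-conditional feature distributions: OT_c(P, Q) = Σ_y P(Y = y)·W₂²(P(·|y), Q(·|y)). -/
open MeasureTheory

/-- Optimal transport cost for an extended-real-valued cost, as an infimum over couplings. -/
noncomputable def OTcost {W : Type*} [MeasurableSpace W] (c : W → W → ENNReal)
    (P Q : Measure W) : ENNReal :=
  ⨅ (π : Measure (W × W)) (_ : π.map Prod.fst = P) (_ : π.map Prod.snd = Q),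
    ∫⁻ p, c p.1 p.2 ∂π

/-- Squared 2-Wasserstein distance as an infimum over couplings. -/
noncomputable def W2sq {Z : Type*} [PseudoEMetricSpace Z] [MeasurableSpace Z]
    (μ ν : Measure Z) : ENNReal :=
  OTcost (fun z z' => edist z z' ^ 2) μ ν

lemma OTcost_le_coupling {W : Type*} [MeasurableSpace W] (c : W → W → ENNReal)
    {P Q : Measure W} (π : Measure (W × W)) (h1 : π.map Prod.fst = P)
    (h2 : π.map Prod.snd = Q) : OTcost c P Q ≤ ∫⁻ p, c p.1 p.2 ∂π :=
  iInf_le_of_le π (iInf_le_of_le h1 (iInf_le_of_le h2 le_rfl))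

lemma le_OTcost {W : Type*} [MeasurableSpace W] (c : W → W → ENNReal)
    {P Q : Measure W} (a : ENNReal)
    (h : ∀ π : Measure (W × W), π.map Prod.fst = P → π.map Prod.snd = Q →
      a ≤ ∫⁻ p, c p.1 p.2 ∂π) : a ≤ OTcost c P Q :=
  le_iInf fun π => le_iInf fun h1 => le_iInf fun h2 => h π h1 h2

lemma map_finset_sum_measure {α β ι : Type*} [MeasurableSpace α] [MeasurableSpace β]
    (s : Finset ι) (μ : ι → Measure α) {f : α → β} (hf : Measurable f) :
    Measure.map f (∑ i ∈ s, μ i) = ∑ i ∈ s, Measure.map f (μ i) := by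
  classical
  refine Finset.induction_on s (by simp) ?_
  intro a s ha ih
  simp [Finset.sum_insert ha, Measure.map_add _ _ hf, ih]

lemma restrict_finset_sum {α ι : Type*} [MeasurableSpace α]
    (s : Finset ι) (μ : ι → Measure α) (t : Set α) :
    (∑ i ∈ s, μ i).restrict t = ∑ i ∈ s, (μ i).restrict t := by
  classical
  refine Finset.induction_on s (by simp) ?_
  intro a s ha ih
  simp [Finset.sum_insert ha, Measure.restrict_add, ih]

/-- for the label-preserving cost
`c((z₁,y₁),(z₂,y₂)) = ‖z₁ − z₂‖² + ∞·1[y₁ ≠ y₂]` and joint distributions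
`P = Σ_y w_y · (μ_y ⊗ δ_y)`, `Q = Σ_y w_y · (ν_y ⊗ δ_y)` with identical label marginals `w`,
the OT cost is finite and equals `Σ_y w_y · W₂²(μ_y, ν_y)`. -/
theorem stmt_18 {Z Y : Type*} [PseudoEMetricSpace Z] [MeasurableSpace Z]
    [OpensMeasurableSpace Z] [Fintype Y] [DecidableEq Y] [MeasurableSpace Y]
    [MeasurableSingletonClass Y]
    (w : Y → ENNReal) (hw : ∑ y, w y = 1)
    (μ ν : Y → Measure Z) (hμ : ∀ y, IsProbabilityMeasure (μ y))
    (hν : ∀ y, IsProbabilityMeasure (ν y))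
    (hfin : ∀ y, W2sq (μ y) (ν y) ≠ ⊤)
    (c : Z × Y → Z × Y → ENNReal)
    (hc : ∀ p q : Z × Y, c p q = if p.2 = q.2 then edist p.1 q.1 ^ 2 else ⊤)
    (P Q : Measure (Z × Y))
    (hP : P = ∑ y, w y • (μ y).map (fun z => (z, y)))
    (hQ : Q = ∑ y, w y • (ν y).map (fun z => (z, y))) :
    OTcost c P Q ≠ ⊤ ∧ OTcost c P Q = ∑ y, w y * W2sq (μ y) (ν y) := by
  classical
  -- basic facts about w
  have w_le_one : ∀ y, w y ≤ 1 := by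
    intro y
    rw [← hw]
    exact Finset.single_le_sum (fun i _ => zero_le) (Finset.mem_univ y)
  have w_ne_top : ∀ y, w y ≠ ⊤ := fun y =>
    ne_top_of_le_ne_top (by simp) (w_le_one y)
  have hRHS_ne_top : (∑ y, w y * W2sq (μ y) (ν y)) ≠ ⊤ := by
    apply (ENNReal.sum_lt_top.mpr ?_).ne
    intro y _
    exact ENNReal.mul_lt_top (w_ne_top y).lt_top (hfin y).lt_top
  -- measurable maps
  have hemb : ∀ y : Y, Measurable (fun z : Z => (z, y)) := fun y =>
    measurable_id.prodMk measurable_const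
  set g : Y → Z × Z → (Z × Y) × (Z × Y) := fun y p => ((p.1, y), (p.2, y)) with hg
  have hgm : ∀ y, Measurable (g y) := fun y =>
    ((measurable_fst.prodMk measurable_const).prodMk
      (measurable_snd.prodMk measurable_const))
  set h : (Z × Y) × (Z × Y) → Z × Z := fun pq => (pq.1.1, pq.2.1) with hh
  have hhm : Measurable h :=
    (measurable_fst.comp measurable_fst).prodMk (measurable_fst.comp measurable_snd)
  -- Upper bound: from any family of couplings
  have upper_aux : ∀ (σ : Y → Measure (Z × Z)),
      (∀ y, (σ y).map Prod.fst = μ y) → (∀ y, (σ y).map Prod.snd = ν y) →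
      OTcost c P Q ≤ ∑ y, w y * ∫⁻ p, edist p.1 p.2 ^ 2 ∂(σ y) := by
    intro σ hσ1 hσ2
    set π : Measure ((Z × Y) × (Z × Y)) := ∑ y, w y • (σ y).map (g y) with hπ
    have hm1 : π.map Prod.fst = P := by
      rw [hπ, map_finset_sum_measure _ _ measurable_fst, hP]
      refine Finset.sum_congr rfl fun y _ => ?_
      rw [Measure.map_smul, Measure.map_map measurable_fst (hgm y),
        show Prod.fst ∘ g y = (fun z : Z => (z, y)) ∘ Prod.fst from rfl,
        ← Measure.map_map (hemb y) measurable_fst, hσ1 y]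
    have hm2 : π.map Prod.snd = Q := by
      rw [hπ, map_finset_sum_measure _ _ measurable_snd, hQ]
      refine Finset.sum_congr rfl fun y _ => ?_
      rw [Measure.map_smul, Measure.map_map measurable_snd (hgm y),
        show Prod.snd ∘ g y = (fun z : Z => (z, y)) ∘ Prod.snd from rfl,
        ← Measure.map_map (hemb y) measurable_snd, hσ2 y]
    refine (OTcost_le_coupling c π hm1 hm2).trans ?_
    rw [hπ, lintegral_finset_sum_measure]
    refine Finset.sum_le_sum fun y _ => ?_
    rw [lintegral_smul_measure]
    refine mul_le_mul_right ?_ _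
    refine (lintegral_map_le (fun p => c p.1 p.2) (g y)).trans ?_
    refine le_of_eq (lintegral_congr fun p => ?_)
    simp [hg, hc]
  -- Upper bound
  have upper : OTcost c P Q ≤ ∑ y, w y * W2sq (μ y) (ν y) := by
    refine ENNReal.le_of_forall_pos_le_add fun ε hε _ => ?_
    have hex : ∀ y : Y, ∃ σ : Measure (Z × Z), σ.map Prod.fst = μ y ∧
        σ.map Prod.snd = ν y ∧
        ∫⁻ p, edist p.1 p.2 ^ 2 ∂σ ≤ W2sq (μ y) (ν y) + ε := by
      intro y
      have hlt : W2sq (μ y) (ν y) < W2sq (μ y) (ν y) + ε := by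
        exact ENNReal.lt_add_right (hfin y) (by exact_mod_cast hε.ne')
      rw [W2sq, OTcost] at hlt
      simp only [iInf_lt_iff] at hlt
      obtain ⟨σ, h1, h2, hcost⟩ := hlt
      exact ⟨σ, h1, h2, hcost.le⟩
    choose σ hσ1 hσ2 hσc using hex
    refine (upper_aux σ hσ1 hσ2).trans ?_
    calc ∑ y, w y * ∫⁻ p, edist p.1 p.2 ^ 2 ∂(σ y)
        ≤ ∑ y, w y * (W2sq (μ y) (ν y) + ε) :=
          Finset.sum_le_sum fun y _ => mul_le_mul_right (hσc y) _
      _ = ∑ y, w y * W2sq (μ y) (ν y) + ∑ y, w y * ε := by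
          rw [← Finset.sum_add_distrib]
          exact Finset.sum_congr rfl fun y _ => mul_add _ _ _
      _ = ∑ y, w y * W2sq (μ y) (ν y) + ε := by
          rw [← Finset.sum_mul, hw, one_mul]
  -- Lower bound
  have lower : (∑ y, w y * W2sq (μ y) (ν y)) ≤ OTcost c P Q := by
    refine le_OTcost c _ fun π h1 h2 => ?_
    -- the label-diagonal set
    set D : Set ((Z × Y) × (Z × Y)) := {pq | pq.1.2 = pq.2.2} with hD
    have hDm : MeasurableSet D := by
      have : D = ⋃ y : Y, ((fun pq : (Z × Y) × (Z × Y) => pq.1.2) ⁻¹' {y} ∩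
          (fun pq : (Z × Y) × (Z × Y) => pq.2.2) ⁻¹' {y}) := by
        ext pq
        simp only [Set.mem_iUnion, Set.mem_inter_iff, Set.mem_preimage,
          Set.mem_singleton_iff, hD, Set.mem_setOf_eq]
        constructor
        · intro hpq; exact ⟨pq.2.2, hpq, rfl⟩
        · rintro ⟨y, hy1, hy2⟩; rw [hy1, hy2]
      rw [this]
      exact MeasurableSet.iUnion fun y =>
        ((measurable_snd.comp measurable_fst) (measurableSet_singleton y)).inter
          ((measurable_snd.comp measurable_snd) (measurableSet_singleton y))
    by_cases hDc : π Dᶜ = 0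
    · -- main case: labels match a.e.
      set S : Y → Set (Z × Y) := fun y => {p | p.2 = y} with hS
      have hSm : ∀ y, MeasurableSet (S y) := fun y =>
        measurable_snd (measurableSet_singleton y)
      set A : Y → Set ((Z × Y) × (Z × Y)) := fun y => Prod.fst ⁻¹' S y with hA
      have hAm : ∀ y, MeasurableSet (A y) := fun y => measurable_fst (hSm y)
      set B : Y → Set ((Z × Y) × (Z × Y)) := fun y => Prod.snd ⁻¹' S y with hB
      -- π decomposes as sum over A y
      have hπsum : π = ∑ y, π.restrict (A y) := by
        ext s hs
        rw [Measure.finset_sum_apply]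
        have : ∀ y, (π.restrict (A y)) s = π (s ∩ A y) := fun y =>
          Measure.restrict_apply hs
        simp_rw [this]
        rw [← measure_biUnion_finset ?_ (fun y _ => hs.inter (hAm y))]
        · congr 1
          ext pq
          simp only [Set.mem_iUnion, Set.mem_inter_iff]
          constructor
          · intro hpq; exact ⟨pq.1.2, Finset.mem_univ _, hpq, rfl⟩
          · rintro ⟨y, _, hy, _⟩; exact hy
        · intro y _ y' _ hne
          refine Set.disjoint_left.mpr fun pq hpq hpq' => hne ?_
          rw [← hpq.2, ← hpq'.2]
      -- restriction on A y and B y agree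
      have hAB : ∀ y, π.restrict (A y) = π.restrict (B y) := by
        intro y
        refine Measure.restrict_congr_set (ae_eq_set.mpr ⟨?_, ?_⟩)
        · refine measure_mono_null ?_ hDc
          rintro pq ⟨hpq1, hpq2⟩
          simp only [hA, hB, hS, Set.mem_preimage, Set.mem_setOf_eq] at hpq1 hpq2
          simp only [hD, Set.mem_compl_iff, Set.mem_setOf_eq]
          intro hcon
          exact hpq2 (hcon ▸ hpq1)
        · refine measure_mono_null ?_ hDc
          rintro pq ⟨hpq1, hpq2⟩
          simp only [hA, hB, hS, Set.mem_preimage, Set.mem_setOf_eq] at hpq1 hpq2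
          simp only [hD, Set.mem_compl_iff, Set.mem_setOf_eq]
          intro hcon
          exact hpq2 (hcon.trans hpq1)
      -- marginals of π.restrict (A y)
      have hmargP : ∀ y, (π.restrict (A y)).map Prod.fst
          = w y • (μ y).map (fun z => (z, y)) := by
        intro y
        rw [hA, ← Measure.restrict_map measurable_fst (hSm y), h1, hP,
          restrict_finset_sum]
        rw [Finset.sum_eq_single y]
        · rw [Measure.restrict_smul,
            Measure.restrict_map (hemb y) (hSm y),
            show (fun z : Z => (z, y)) ⁻¹' S y = Set.univ from by
              ext z; simp [hS],
            Measure.restrict_univ]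
        · intro y' _ hne
          rw [Measure.restrict_smul, Measure.restrict_map (hemb y') (hSm y),
            show (fun z : Z => (z, y')) ⁻¹' S y = ∅ from by
              ext z; simp [hS, hne],
            Measure.restrict_empty, Measure.map_zero, smul_zero]
        · intro hy; exact absurd (Finset.mem_univ y) hy
      have hmargQ : ∀ y, (π.restrict (A y)).map Prod.snd
          = w y • (ν y).map (fun z => (z, y)) := by
        intro y
        rw [hAB y, hB, ← Measure.restrict_map measurable_snd (hSm y), h2, hQ,
          restrict_finset_sum]
        rw [Finset.sum_eq_single y]
        · rw [Measure.restrict_smul,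
            Measure.restrict_map (hemb y) (hSm y),
            show (fun z : Z => (z, y)) ⁻¹' S y = Set.univ from by
              ext z; simp [hS],
            Measure.restrict_univ]
        · intro y' _ hne
          rw [Measure.restrict_smul, Measure.restrict_map (hemb y') (hSm y),
            show (fun z : Z => (z, y')) ⁻¹' S y = ∅ from by
              ext z; simp [hS, hne],
            Measure.restrict_empty, Measure.map_zero, smul_zero]
        · intro hy; exact absurd (Finset.mem_univ y) hy
      -- the induced coupling on Z × Z
      have key : ∀ y, w y * W2sq (μ y) (ν y)
          ≤ ∫⁻ pq, c pq.1 pq.2 ∂(π.restrict (A y)) := by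
        intro y
        set κ : Measure (Z × Z) := (π.restrict (A y)).map h with hκ
        have hκ1 : κ.map Prod.fst = w y • μ y := by
          rw [hκ, Measure.map_map measurable_fst hhm,
            show Prod.fst ∘ h = Prod.fst ∘ (Prod.fst :
              (Z × Y) × (Z × Y) → Z × Y) from rfl,
            ← Measure.map_map measurable_fst measurable_fst, hmargP y,
            Measure.map_smul, Measure.map_map measurable_fst (hemb y),
            show (Prod.fst ∘ fun z : Z => (z, y)) = id from rfl, Measure.map_id]
        have hκ2 : κ.map Prod.snd = w y • ν y := by
          rw [hκ, Measure.map_map measurable_snd hhm,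
            show Prod.snd ∘ h = Prod.fst ∘ (Prod.snd :
              (Z × Y) × (Z × Y) → Z × Y) from rfl,
            ← Measure.map_map measurable_fst measurable_snd, hmargQ y,
            Measure.map_smul, Measure.map_map measurable_fst (hemb y),
            show (Prod.fst ∘ fun z : Z => (z, y)) = id from rfl, Measure.map_id]
        -- cost comparison
        have hcost1 : ∫⁻ q, edist q.1 q.2 ^ 2 ∂κ
            ≤ ∫⁻ pq, c pq.1 pq.2 ∂(π.restrict (A y)) := by
          refine (lintegral_map_le (fun q : Z × Z => edist q.1 q.2 ^ 2) h).trans ?_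
          refine le_of_eq (lintegral_congr_ae ?_)
          have hae : ∀ᵐ pq ∂(π.restrict (A y)), pq ∈ D := by
            rw [MeasureTheory.ae_iff]
            have hle : (π.restrict (A y)) {pq | pq ∉ D} ≤ π Dᶜ := by
              rw [show {pq : (Z × Y) × (Z × Y) | pq ∉ D} = Dᶜ from rfl,
                Measure.restrict_apply hDm.compl]
              exact measure_mono Set.inter_subset_left
            exact le_antisymm (hDc ▸ hle) zero_le
          filter_upwards [hae] with pq hpq
          rw [hc]
          simp only [hD, Set.mem_setOf_eq] at hpq
          rw [if_pos hpq]
        by_cases hwy : w y = 0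
        · simp [hwy]
        · -- normalize
          set σ : Measure (Z × Z) := (w y)⁻¹ • κ with hσ
          have hinv : (w y)⁻¹ * w y = 1 := ENNReal.inv_mul_cancel hwy (w_ne_top y)
          have hσ1 : σ.map Prod.fst = μ y := by
            rw [hσ, Measure.map_smul, hκ1, smul_smul, hinv, one_smul]
          have hσ2 : σ.map Prod.snd = ν y := by
            rw [hσ, Measure.map_smul, hκ2, smul_smul, hinv, one_smul]
          have hW : W2sq (μ y) (ν y) ≤ ∫⁻ q, edist q.1 q.2 ^ 2 ∂σ :=
            OTcost_le_coupling _ σ hσ1 hσ2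
          calc w y * W2sq (μ y) (ν y)
              ≤ w y * ∫⁻ q, edist q.1 q.2 ^ 2 ∂σ := mul_le_mul_right hW _
            _ = w y * ((w y)⁻¹ * ∫⁻ q, edist q.1 q.2 ^ 2 ∂κ) := by
                rw [hσ, lintegral_smul_measure, smul_eq_mul]
            _ = ∫⁻ q, edist q.1 q.2 ^ 2 ∂κ := by
                rw [← mul_assoc, ENNReal.mul_inv_cancel hwy (w_ne_top y), one_mul]
            _ ≤ _ := hcost1
      calc (∑ y, w y * W2sq (μ y) (ν y))
          ≤ ∑ y, ∫⁻ pq, c pq.1 pq.2 ∂(π.restrict (A y)) :=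
            Finset.sum_le_sum fun y _ => key y
        _ = ∫⁻ pq, c pq.1 pq.2 ∂π := by
            rw [← lintegral_finset_sum_measure, ← hπsum]
    · -- degenerate case: infinite cost
      have : ∫⁻ pq, c pq.1 pq.2 ∂π = ⊤ := by
        refine top_unique ?_
        calc (⊤ : ENNReal) = ⊤ * π Dᶜ := (ENNReal.top_mul hDc).symm
          _ = ∫⁻ pq in Dᶜ, ⊤ ∂π := (setLIntegral_const _ _).symm
          _ = ∫⁻ pq in Dᶜ, c pq.1 pq.2 ∂π := by
              refine (setLIntegral_congr_fun hDm.compl ?_).symm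
              intro pq hpq
              dsimp only
              rw [hc]
              exact if_neg hpq
          _ ≤ ∫⁻ pq, c pq.1 pq.2 ∂π := setLIntegral_le_lintegral _ _
      rw [this]
      exact le_top
  have heq : OTcost c P Q = ∑ y, w y * W2sq (μ y) (ν y) := le_antisymm upper lower
  exact ⟨heq ▸ hRHS_ne_top, heq⟩
end
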